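/- arXiv:2107.09424 — 7 statements merged into one kernel-verified Lean document; each statement's English description precedes it below -/
import Mathlib

section
/- Let N be an integer, n ≥ 1, and w_1, …, w_n positive integers. If N * ∏_{i=1}^n (1 + t^{w_i}) * (1 - t^{w_i})⁻¹ is a constant power series in ℚ⟦t⟧, then N = 0. -/
open PowerSeries

namespace PowerSeries

variable {k : Type*} [Field k]

theorem inv_one_sub_X_pow_mul_cancel {w : ℕ} (hw : w ≠ 0) :
    (1 - (X : k⟦X⟧) ^ w)⁻¹ * (1 - X ^ w) = 1 :=
  PowerSeries.inv_mul_cancel _ (by simp [hw])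

theorem mul_prod_eq_mul_prod_one_sub_X_pow {ι : Type*} {s : Finset ι} {w : ι → ℕ}
    (hw : ∀ i ∈ s, w i ≠ 0) {a b : k⟦X⟧} {f : ι → k⟦X⟧}
    (h : a * ∏ i ∈ s, f i * (1 - X ^ w i)⁻¹ = b) :
    a * ∏ i ∈ s, f i = b * ∏ i ∈ s, (1 - X ^ w i) := by
  rw [← h, mul_assoc, ← Finset.prod_mul_distrib]
  refine congrArg _ (Finset.prod_congr rfl fun i hi => ?_)
  rw [mul_assoc, inv_one_sub_X_pow_mul_cancel (hw i hi), mul_one]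

/-- Both sides are polynomials; at `t = 1` the left one is `2 ^ #s * a` and the right one vanishes. -/
theorem eq_zero_of_C_mul_prod_one_add_X_pow_eq [CharZero k] {ι : Type*} {s : Finset ι}
    (hs : s.Nonempty) (w : ι → ℕ) {a c : k}
    (h : C a * ∏ i ∈ s, (1 + X ^ w i) = C c * ∏ i ∈ s, (1 - (X : k⟦X⟧) ^ w i)) :
    a = 0 := by
  have hpoly : Polynomial.C a * ∏ i ∈ s, (1 + Polynomial.X ^ w i)
      = Polynomial.C c * ∏ i ∈ s, (1 - Polynomial.X ^ w i) :=
    Polynomial.coe_injective k <| by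
      rw [← Polynomial.coeToPowerSeries.ringHom_apply, ← Polynomial.coeToPowerSeries.ringHom_apply,
        map_mul, map_mul, map_prod, map_prod]
      simpa [Polynomial.coeToPowerSeries.ringHom_apply] using h
  have heval := congrArg (Polynomial.eval 1) hpoly
  simp only [Polynomial.eval_mul, Polynomial.eval_C, Polynomial.eval_prod, Polynomial.eval_add,
    Polynomial.eval_sub, Polynomial.eval_one, Polynomial.eval_pow, Polynomial.eval_X, one_pow,
    sub_self, Finset.prod_const, zero_pow hs.card_pos.ne', mul_zero] at heval
  simpa using heval

end PowerSeries

theorem stmt_3 (N : ℤ) (n : ℕ) (hn : 0 < n) (w : Fin n → ℕ) (hw : ∀ i, 0 < w i)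
    (h : ∃ c : ℚ, (N : ℚ⟦X⟧) * ∏ i, (1 + (X : ℚ⟦X⟧) ^ w i) * (1 - (X : ℚ⟦X⟧) ^ w i)⁻¹
      = C c) :
    N = 0 := by
  obtain ⟨c, hc⟩ := h
  rw [← map_intCast (C (R := ℚ))] at hc
  have hN := eq_zero_of_C_mul_prod_one_add_X_pow_eq (Finset.univ_nonempty_iff.mpr ⟨⟨0, hn⟩⟩) w
    (mul_prod_eq_mul_prod_one_sub_X_pow (fun i _ => (hw i).ne') hc)
  exact_mod_cast hN
end

section
/- Let n ≥ 1 and let a_1, …, a_n and b_1, …, b_n be positive integers. If ∏_{i=1}^n (1 + t^{a_i}) * (1 - t^{a_i})⁻¹ = ∏_{i=1}^n (1 + t^{b_i}) * (1 - t^{b_i})⁻¹ as formal power series in ℚ⟦t⟧, then the multisets {a_1, …, a_n} and {b_1, …, b_n} are equal. -/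
/-!
Write `F w = weightFactor w = (1 + t^w)(1 - t^w)⁻¹ = 1 + 2t^w + 2t^{2w} + ⋯`. If every weight of
a multiset is at least `m ≥ 1`, each factor is `1` modulo `t^m`, so modulo `t^{m+1}` the product
is `1 + 2 c t^m`, where `c` is the number of weights equal to `m`. Hence the two products determine
the multiplicity of every weight, by strong induction on the weight: once the weights below `m`
are known to agree, their factors cancel from both sides and the coefficient of `t^m` counts the
weights equal to `m`.
-/

open PowerSeries

namespace PowerSeries

section CommRing

variable {R : Type*} [CommRing R] {m : ℕ}

theorem X_pow_dvd_mul_sub_one {A B : R⟦X⟧} (hA : X ^ m ∣ A - 1) (hB : X ^ m ∣ B - 1) :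
    X ^ m ∣ A * B - 1 := by
  have hsplit : A * B - 1 = (A - 1) * B + (B - 1) := by ring
  rw [hsplit]
  exact dvd_add (dvd_mul_of_dvd_left hA B) hB

theorem coeff_mul_of_X_pow_dvd_sub_one (hm : 0 < m) {A B : R⟦X⟧} (hA : X ^ m ∣ A - 1)
    (hB : X ^ m ∣ B - 1) : coeff m (A * B) = coeff m A + coeff m B := by
  obtain ⟨g, hg⟩ := mul_dvd_mul hA hB
  have hsplit : A * B = A + B - 1 + X ^ (m + m) * g := by rw [pow_add, ← hg]; ring
  rw [hsplit, map_add, map_sub, map_add, coeff_X_pow_mul', if_neg (by omega), coeff_one,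
    if_neg hm.ne']
  ring

theorem X_pow_dvd_multiset_prod_sub_one (u : Multiset R⟦X⟧) (hu : ∀ A ∈ u, X ^ m ∣ A - 1) :
    X ^ m ∣ u.prod - 1 := by
  induction u using Multiset.induction_on with
  | empty => simp
  | cons A u ih =>
    obtain ⟨hA, hu⟩ := Multiset.forall_mem_cons.mp hu
    rw [Multiset.prod_cons]
    exact X_pow_dvd_mul_sub_one hA (ih hu)

theorem coeff_multiset_prod_of_X_pow_dvd_sub_one (hm : 0 < m) (u : Multiset R⟦X⟧)
    (hu : ∀ A ∈ u, X ^ m ∣ A - 1) : coeff m u.prod = (u.map (coeff m)).sum := by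
  induction u using Multiset.induction_on with
  | empty => simp [coeff_one, hm.ne']
  | cons A u ih =>
    obtain ⟨hA, hu⟩ := Multiset.forall_mem_cons.mp hu
    rw [Multiset.prod_cons, coeff_mul_of_X_pow_dvd_sub_one hm hA
      (X_pow_dvd_multiset_prod_sub_one u hu), ih hu, Multiset.map_cons, Multiset.sum_cons]

end CommRing

section Field

variable (k : Type*) [Field k]

noncomputable def weightFactor (w : ℕ) : k⟦X⟧ := (1 + X ^ w) * (1 - X ^ w)⁻¹

variable {k}

theorem constantCoeff_one_sub_X_pow {w : ℕ} (hw : 0 < w) :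
    constantCoeff (1 - X ^ w : k⟦X⟧) = 1 := by
  simp [hw.ne']

theorem weightFactor_eq {w : ℕ} (hw : 0 < w) :
    weightFactor k w = 1 + X ^ w * (2 * (1 - X ^ w)⁻¹) := by
  have hinv := PowerSeries.mul_inv_cancel (1 - X ^ w : k⟦X⟧)
    (by rw [constantCoeff_one_sub_X_pow hw]; exact one_ne_zero)
  calc weightFactor k w = (1 - X ^ w) * (1 - X ^ w)⁻¹ + X ^ w * (2 * (1 - X ^ w)⁻¹) := by
        unfold weightFactor; ring
    _ = 1 + X ^ w * (2 * (1 - X ^ w)⁻¹) := by rw [hinv]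

theorem weightFactor_ne_zero {w : ℕ} (hw : 0 < w) : weightFactor k w ≠ 0 := by
  intro h0
  have := congrArg constantCoeff h0
  simp [weightFactor, constantCoeff_inv, hw.ne'] at this

theorem X_pow_dvd_weightFactor_sub_one {w : ℕ} (hw : 0 < w) (hmw : m ≤ w) :
    X ^ m ∣ weightFactor k w - 1 := by
  rw [weightFactor_eq hw, add_sub_cancel_left]
  exact dvd_mul_of_dvd_left (pow_dvd_pow X hmw) _

theorem coeff_weightFactor {w : ℕ} (hm : 0 < m) (hmw : m ≤ w) :
    coeff m (weightFactor k w) = if w = m then 2 else 0 := by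
  rw [weightFactor_eq (hm.trans_le hmw), map_add, coeff_X_pow_mul', coeff_one, if_neg hm.ne']
  rcases hmw.eq_or_lt with rfl | hlt
  · simp [constantCoeff_inv, constantCoeff_one_sub_X_pow hm, map_ofNat]
  · simp [hlt.ne', hlt.not_ge]

theorem coeff_prod_weightFactor (hm : 0 < m) (s : Multiset ℕ) (hs : ∀ w ∈ s, m ≤ w) :
    coeff m (s.map (weightFactor k)).prod = 2 * s.count m := by
  rw [coeff_multiset_prod_of_X_pow_dvd_sub_one hm _ (by
    simpa using fun w hw => X_pow_dvd_weightFactor_sub_one (hm.trans_le (hs w hw)) (hs w hw))]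
  induction s using Multiset.induction_on with
  | empty => simp
  | cons w s ih =>
    obtain ⟨hw, hs⟩ := Multiset.forall_mem_cons.mp hs
    rw [Multiset.map_cons, Multiset.map_cons, Multiset.sum_cons, ih hs, coeff_weightFactor hm hw,
      Multiset.count_cons]
    rcases eq_or_ne w m with rfl | hwm
    · simp; ring
    · simp [hwm, hwm.symm]

theorem count_eq_of_prod_weightFactor_eq [CharZero k] {s t : Multiset ℕ} (hs : ∀ w ∈ s, 0 < w)
    (ht : ∀ w ∈ t, 0 < w) (h : (s.map (weightFactor k)).prod = (t.map (weightFactor k)).prod)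
    (m : ℕ) : s.count m = t.count m := by
  induction m using Nat.strong_induction_on with
  | _ m ih =>
  rcases Nat.eq_zero_or_pos m with rfl | hm
  · rw [Multiset.count_eq_zero.mpr fun h0 => (hs 0 h0).false,
      Multiset.count_eq_zero.mpr fun h0 => (ht 0 h0).false]
  have hlow : s.filter (· < m) = t.filter (· < m) := by
    ext w
    simp only [Multiset.count_filter]
    split_ifs with hw
    exacts [ih w hw, rfl]
  have hhigh : ((s.filter fun w => ¬w < m).map (weightFactor k)).prod
      = ((t.filter fun w => ¬w < m).map (weightFactor k)).prod := by
    rw [← Multiset.filter_add_not (· < m) s, ← Multiset.filter_add_not (· < m) t, hlow,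
      Multiset.map_add, Multiset.map_add, Multiset.prod_add, Multiset.prod_add] at h
    refine mul_left_cancel₀ (Multiset.prod_ne_zero fun h0 => ?_) h
    obtain ⟨w, hw, hw0⟩ := Multiset.mem_map.mp h0
    exact weightFactor_ne_zero (ht w (Multiset.mem_of_mem_filter hw)) hw0
  have hcount (u : Multiset ℕ) : (u.filter fun w => ¬w < m).count m = u.count m :=
    Multiset.count_filter_of_pos (lt_irrefl m)
  have hcoeff := congrArg (coeff m) hhigh
  rw [coeff_prod_weightFactor hm _ (by simp), coeff_prod_weightFactor hm _ (by simp), hcount,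
    hcount] at hcoeff
  exact_mod_cast mul_left_cancel₀ two_ne_zero hcoeff

theorem eq_of_prod_weightFactor_eq [CharZero k] {s t : Multiset ℕ} (hs : ∀ w ∈ s, 0 < w)
    (ht : ∀ w ∈ t, 0 < w) (h : (s.map (weightFactor k)).prod = (t.map (weightFactor k)).prod) :
    s = t :=
  Multiset.ext.mpr (count_eq_of_prod_weightFactor_eq hs ht h)

end Field

end PowerSeries

theorem stmt_4_general (n : ℕ) (a b : Fin n → ℕ)
    (ha : ∀ i, 0 < a i) (hb : ∀ i, 0 < b i)
    (h : (∏ i, (1 + (X : ℚ⟦X⟧) ^ a i) * (1 - (X : ℚ⟦X⟧) ^ a i)⁻¹)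
       = ∏ i, (1 + (X : ℚ⟦X⟧) ^ b i) * (1 - (X : ℚ⟦X⟧) ^ b i)⁻¹) :
    (↑(List.ofFn a) : Multiset ℕ) = ↑(List.ofFn b) := by
  have hprod (c : Fin n → ℕ) :
      ((List.ofFn c : Multiset ℕ).map (weightFactor ℚ)).prod = ∏ i, weightFactor ℚ (c i) := by
    rw [Multiset.map_coe, Multiset.prod_coe, List.map_ofFn, List.prod_ofFn]
    rfl
  have hpos (c : Fin n → ℕ) (hc : ∀ i, 0 < c i) : ∀ w ∈ (List.ofFn c : Multiset ℕ), 0 < w := by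
    simpa using hc
  exact eq_of_prod_weightFactor_eq (hpos a ha) (hpos b hb)
    ((hprod a).trans (h.trans (hprod b).symm))

theorem stmt_4 (n : ℕ) (hn : 0 < n) (a b : Fin n → ℕ)
    (ha : ∀ i, 0 < a i) (hb : ∀ i, 0 < b i)
    (h : (∏ i, (1 + (X : ℚ⟦X⟧) ^ a i) * (1 - (X : ℚ⟦X⟧) ^ a i)⁻¹)
       = ∏ i, (1 + (X : ℚ⟦X⟧) ^ b i) * (1 - (X : ℚ⟦X⟧) ^ b i)⁻¹) :
    (↑(List.ofFn a) : Multiset ℕ) = ↑(List.ofFn b) :=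
  stmt_4_general n a b ha hb h
end

section
/- For n ≥ 1, the following polynomial identity holds in ℤ[x_1,…,x_n, y_1,…,y_n, z_1,…,z_n]: -∏_{i=1}^n (1-x_i)(1-y_i)(1-z_i) + ∏_{i=1}^n (1+x_i)(1+y_i)(1-z_i) + ∏_{i=1}^n (1+x_i)(1-y_i)(1+z_i) - ∏_{i=1}^n (1-x_i)(1+y_i)(1+z_i) = 4·∑_{(d,e,f)} (-1)^{∑e_i} x^d y^e z^f, where the sum ranges over triples of vectors d, e, f ∈ {0,1}^n such that either (∑d_i is odd, ∑e_i is even, ∑f_i is even) or (∑d_i is even, ∑e_i is odd, ∑f_i is odd), and x^d denotes ∏ x_i^{d_i}, etc. -/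
/-!
Expanding `∏ i, (1 + σ x i) (1 + τ y i) (1 + ρ z i)` with signs `σ τ ρ = ±1` over `{0,1}`-exponent
vectors, the monomial `x^d y^e z^f` gets the coefficient `σ^|d| τ^|e| ρ^|f|`. In the four-term
combination its coefficient is therefore `-(-1)^(|d|+|e|+|f|) + (-1)^|f| + (-1)^|e| - (-1)^|d|`,
which depends only on the parities of `|d|, |e|, |f|`: it equals `4 (-1)^|e|` on the two parity
classes of the statement and vanishes on the other six.
-/

open Finset

theorem Fintype.sum_mul_sum_mul_sum {α β γ R : Type*} [Fintype α] [Fintype β] [Fintype γ]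
    [NonUnitalNonAssocSemiring R] (f : α → R) (g : β → R) (h : γ → R) :
    (∑ a, f a) * (∑ b, g b) * ∑ c, h c = ∑ v : α × β × γ, f v.1 * g v.2.1 * h v.2.2 := by
  simp only [Fintype.sum_prod_type, ← mul_sum, ← sum_mul]

variable {ι : Type*} [Fintype ι]

section CommSemiring

variable {R : Type*} [CommSemiring R] [DecidableEq ι]

theorem prod_one_add_eq_sum_bool (x : ι → R) :
    ∏ i, (1 + x i) = ∑ d : ι → Bool, ∏ i, x i ^ (if d i then 1 else 0) :=
  calc ∏ i, (1 + x i) = ∏ i, ∑ b : Bool, x i ^ (if b then 1 else 0) := by simp [add_comm]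
    _ = _ := Fintype.prod_sum _

theorem prod_three_one_add_eq_sum_bool (x y z : ι → R) :
    ∏ i, ((1 + x i) * (1 + y i) * (1 + z i)) =
      ∑ v : (ι → Bool) × (ι → Bool) × (ι → Bool),
        (∏ i, x i ^ (if v.1 i then 1 else 0)) * (∏ i, y i ^ (if v.2.1 i then 1 else 0)) *
          ∏ i, z i ^ (if v.2.2 i then 1 else 0) := by
  rw [prod_mul_distrib, prod_mul_distrib, prod_one_add_eq_sum_bool, prod_one_add_eq_sum_bool,
    prod_one_add_eq_sum_bool, Fintype.sum_mul_sum_mul_sum]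

end CommSemiring

section CommRing

variable {R : Type*} [CommRing R]

theorem prod_neg_pow_ite (x : ι → R) (d : ι → Bool) :
    ∏ i, (-x i) ^ (if d i then 1 else 0) =
      (-1) ^ #{i | d i = true} * ∏ i, x i ^ (if d i then 1 else 0) := by
  simp only [neg_eq_neg_one_mul (x _), mul_pow, prod_mul_distrib, prod_pow_eq_pow_sum, card_filter]

theorem neg_one_pow_combination_mul (a b c : ℕ) (m : R) :
    (-(-1) ^ (a + b + c) + (-1) ^ c + (-1) ^ b - (-1) ^ a) * m =
      4 * if (Odd a ∧ Even b ∧ Even c) ∨ (Even a ∧ Odd b ∧ Odd c) then (-1) ^ b * m else 0 := by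
  simp only [← Nat.not_even_iff_odd, neg_one_pow_eq_ite, Nat.even_add]
  by_cases ha : Even a <;> by_cases hb : Even b <;> by_cases hc : Even c <;>
    simp only [ha, hb, hc, iff_true, iff_false, not_true_eq_false, not_false_eq_true,
      and_true, and_false, or_false, false_or, ↓reduceIte] <;>
    ring

end CommRing

theorem stmt_9_general (n : ℕ) (R : Type) [CommRing R] (x y z : Fin n → R) :
    - ∏ i, ((1 - x i) * (1 - y i) * (1 - z i))
    + ∏ i, ((1 + x i) * (1 + y i) * (1 - z i))
    + ∏ i, ((1 + x i) * (1 - y i) * (1 + z i))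
    - ∏ i, ((1 - x i) * (1 + y i) * (1 + z i))
    = 4 * ∑ v ∈ Finset.univ.filter
        (fun v : (Fin n → Bool) × (Fin n → Bool) × (Fin n → Bool) =>
          let cd := (Finset.univ.filter (fun i => v.1 i = true)).card
          let ce := (Finset.univ.filter (fun i => v.2.1 i = true)).card
          let cf := (Finset.univ.filter (fun i => v.2.2 i = true)).card
          (Odd cd ∧ Even ce ∧ Even cf) ∨ (Even cd ∧ Odd ce ∧ Odd cf)),
        ((-1 : R) ^ (Finset.univ.filter (fun i => v.2.1 i = true)).card *
          ((∏ i, x i ^ (if v.1 i then 1 else 0)) *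
           (∏ i, y i ^ (if v.2.1 i then 1 else 0)) *
           (∏ i, z i ^ (if v.2.2 i then 1 else 0)))) := by
  simp only [sub_eq_add_neg (1 : R), prod_three_one_add_eq_sum_bool, prod_neg_pow_ite]
  rw [sum_filter, mul_sum, ← sum_neg_distrib, ← sum_add_distrib, ← sum_add_distrib,
    ← sum_sub_distrib]
  refine sum_congr rfl fun v _ => ?_
  rw [← neg_one_pow_combination_mul]
  ring

theorem stmt_9 (n : ℕ) (hn : 0 < n) (R : Type) [CommRing R] (x y z : Fin n → R) :
    - ∏ i, ((1 - x i) * (1 - y i) * (1 - z i))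
    + ∏ i, ((1 + x i) * (1 + y i) * (1 - z i))
    + ∏ i, ((1 + x i) * (1 - y i) * (1 + z i))
    - ∏ i, ((1 - x i) * (1 + y i) * (1 + z i))
    = 4 * ∑ v ∈ Finset.univ.filter
        (fun v : (Fin n → Bool) × (Fin n → Bool) × (Fin n → Bool) =>
          let cd := (Finset.univ.filter (fun i => v.1 i = true)).card
          let ce := (Finset.univ.filter (fun i => v.2.1 i = true)).card
          let cf := (Finset.univ.filter (fun i => v.2.2 i = true)).card
          (Odd cd ∧ Even ce ∧ Even cf) ∨ (Even cd ∧ Odd ce ∧ Odd cf)),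
        ((-1 : R) ^ (Finset.univ.filter (fun i => v.2.1 i = true)).card *
          ((∏ i, x i ^ (if v.1 i then 1 else 0)) *
           (∏ i, y i ^ (if v.2.1 i then 1 else 0)) *
           (∏ i, z i ^ (if v.2.2 i then 1 else 0)))) :=
  stmt_9_general n R x y z
end

section
/- Let n ≥ 2 and let a_1 ≤ … ≤ a_n, b_1 ≤ … ≤ b_n, c_1 ≤ … ≤ c_n be positive integers. Define multisets A and B as follows: A consists of all sums ∑_i (d_i a_i + e_i b_i + f_i c_i) over d, e, f ∈ {0,1}^n with ∑d_i odd, ∑e_i even, ∑f_i even; B consists of such sums with ∑d_i even, ∑e_i odd, ∑f_i odd. If A = B as multisets, then a_1 = b_1 + c_1, and moreover a_2 = b_1 + c_2 or a_2 = b_2 + c_1. -/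
/-! The elements of both multisets are sums `∑_D a + ∑_E b + ∑_F c` over triples of index sets
with prescribed size parities.  By monotonicity the least element of `A` is `a₁` (`D = {1}`) and
that of `B` is `b₁ + c₁` (`E = F = {1}`), which gives the first claim.  By positivity each minimum
is attained by a single triple, and the next elements are `a₂` in `A` and
`min (b₁ + c₂) (b₂ + c₁)` in `B`; if these differed, one multiset would have two elements below a
threshold under which the other has only one.  In the code indices are `0`-based: `a 0` is `a₁`. -/

open Finset

section MultisetCount

variable {α : Type*} {s t : Finset α} {w : α → ℕ}

theorem Finset.map_val_ne_of_unique_le {u : ℕ} {x₁ x₂ y₀ : α} (hx₁ : x₁ ∈ s) (hx₂ : x₂ ∈ s)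
    (hne : x₁ ≠ x₂) (h₁ : w x₁ ≤ u) (h₂ : w x₂ ≤ u) (huniq : ∀ y ∈ t, w y ≤ u → y = y₀) :
    s.val.map w ≠ t.val.map w := by
  intro h
  have hcount := congrArg (Multiset.countP (· ≤ u)) h
  simp only [Multiset.countP_map, ← Finset.filter_val, Finset.card_val] at hcount
  have htwo : 1 < #(s.filter (w · ≤ u)) :=
    one_lt_card.mpr ⟨x₁, mem_filter.mpr ⟨hx₁, h₁⟩, x₂, mem_filter.mpr ⟨hx₂, h₂⟩, hne⟩
  have hone : #(t.filter (w · ≤ u)) ≤ 1 := card_le_one.mpr fun y hy y' hy' => by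
    rw [mem_filter] at hy hy'
    rw [huniq y hy.1 hy.2, huniq y' hy'.1 hy'.2]
  omega

end MultisetCount

section MonotoneSum

variable {k : ℕ} {g : Fin (k + 2) → ℕ} {s : Finset (Fin (k + 2))}

theorem Monotone.apply_zero_le_sum (hg : Monotone g) (hs : s.Nonempty) :
    g 0 ≤ ∑ i ∈ s, g i := by
  obtain ⟨i, hi⟩ := hs
  exact (hg (Fin.zero_le i)).trans (single_le_sum (fun _ _ => Nat.zero_le _) hi)

theorem Monotone.apply_one_le_sum (hg : Monotone g) {i : Fin (k + 2)} (hi : i ∈ s)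
    (hi0 : i ≠ 0) : g 1 ≤ ∑ j ∈ s, g j :=
  (hg (Fin.one_le_of_ne_zero hi0)).trans (single_le_sum (fun _ _ => Nat.zero_le _) hi)

theorem Monotone.apply_zero_add_apply_one_le_sum (hg : Monotone g) (hs : 1 < #s) :
    g 0 + g 1 ≤ ∑ i ∈ s, g i := by
  obtain ⟨i, hi, j, hj, hij⟩ := one_lt_card.mp hs
  have hpair : g i + g j ≤ ∑ l ∈ s, g l := by
    rw [← sum_pair hij]
    exact sum_le_sum_of_subset (insert_subset hi (singleton_subset_iff.mpr hj))
  rcases eq_or_ne i 0 with rfl | hi0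
  · have := hg (Fin.one_le_of_ne_zero hij.symm)
    omega
  · have := hg (Fin.one_le_of_ne_zero hi0)
    have := hg (Fin.zero_le j)
    omega

end MonotoneSum

theorem Finset.one_lt_card_of_even {α : Type*} {s : Finset α} (he : Even #s) (hs : s.Nonempty) :
    1 < #s := by
  obtain ⟨m, hm⟩ := he
  have := hs.card_pos
  omega

theorem Finset.eq_singleton_of_odd_of_forall_eq {α : Type*} {s : Finset α} {a : α} (ho : Odd #s)
    (hs : ∀ b ∈ s, b = a) : s = {a} :=
  (subset_singleton_iff'.mpr hs |> subset_singleton_iff.mp).resolve_left fun h => by simp [h] at ho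

namespace FixedPointWeights

variable {n : ℕ}

abbrev Triple (n : ℕ) := (Fin n → Bool) × (Fin n → Bool) × (Fin n → Bool)

def supp (v : Fin n → Bool) : Finset (Fin n) := univ.filter (fun i => v i = true)

def ind (s : Finset (Fin n)) : Fin n → Bool := fun i => decide (i ∈ s)

@[simp]
theorem supp_ind (s : Finset (Fin n)) : supp (ind s) = s := by
  ext i; simp [supp, ind]

@[simp]
theorem ind_supp (v : Fin n → Bool) : ind (supp v) = v := by
  funext i; simp [supp, ind]

theorem ind_injective : Function.Injective (ind (n := n)) :=
  Function.LeftInverse.injective supp_ind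

theorem eq_ind_supp (v : Triple n) : v = (ind (supp v.1), ind (supp v.2.1), ind (supp v.2.2)) := by
  simp

def weight (a b c : Fin n → ℕ) (v : Triple n) : ℕ :=
  ∑ i, ((if v.1 i then a i else 0) + (if v.2.1 i then b i else 0) + (if v.2.2 i then c i else 0))

theorem weight_eq (a b c : Fin n → ℕ) (v : Triple n) :
    weight a b c v = ∑ i ∈ supp v.1, a i + ∑ i ∈ supp v.2.1, b i + ∑ i ∈ supp v.2.2, c i := by
  simp only [weight, supp, sum_filter, sum_add_distrib]

@[simp]
theorem weight_ind (a b c : Fin n → ℕ) (s t u : Finset (Fin n)) :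
    weight a b c (ind s, ind t, ind u) = ∑ i ∈ s, a i + ∑ i ∈ t, b i + ∑ i ∈ u, c i := by
  simp [weight_eq]

def oddEvenEven (n : ℕ) : Finset (Triple n) :=
  univ.filter fun v => Odd #(supp v.1) ∧ Even #(supp v.2.1) ∧ Even #(supp v.2.2)

def evenOddOdd (n : ℕ) : Finset (Triple n) :=
  univ.filter fun v => Even #(supp v.1) ∧ Odd #(supp v.2.1) ∧ Odd #(supp v.2.2)

@[simp]
theorem mem_oddEvenEven {v : Triple n} :
    v ∈ oddEvenEven n ↔ Odd #(supp v.1) ∧ Even #(supp v.2.1) ∧ Even #(supp v.2.2) := by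
  simp [oddEvenEven]

@[simp]
theorem mem_evenOddOdd {v : Triple n} :
    v ∈ evenOddOdd n ↔ Even #(supp v.1) ∧ Odd #(supp v.2.1) ∧ Odd #(supp v.2.2) := by
  simp [evenOddOdd]

theorem exists_mem_evenOddOdd_weight_eq_min {k : ℕ} (a b c : Fin (k + 2) → ℕ) :
    ∃ x ∈ evenOddOdd _, x ≠ (ind ∅, ind {0}, ind {0}) ∧
      weight a b c x = min (b 0 + c 1) (b 1 + c 0) := by
  rcases min_choice (b 0 + c 1) (b 1 + c 0) with hm | hm
  · exact ⟨(ind ∅, ind {0}, ind {1}), by simp, by simp [ind_injective.eq_iff], by simp [hm]⟩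
  · exact ⟨(ind ∅, ind {1}, ind {0}), by simp, by simp [ind_injective.eq_iff], by simp [hm]⟩

section Monotone

variable {k : ℕ} {a b c : Fin (k + 2) → ℕ} {v : Triple (k + 2)}

theorem apply_zero_le_weight_of_mem_oddEvenEven (ha : Monotone a) (hv : v ∈ oddEvenEven _) :
    a 0 ≤ weight a b c v := by
  rw [weight_eq]
  have := ha.apply_zero_le_sum (card_pos.mp (mem_oddEvenEven.mp hv).1.pos)
  omega

theorem add_le_weight_of_mem_evenOddOdd (hb : Monotone b) (hc : Monotone c)
    (hv : v ∈ evenOddOdd _) : b 0 + c 0 ≤ weight a b c v := by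
  obtain ⟨-, he, hf⟩ := mem_evenOddOdd.mp hv
  rw [weight_eq]
  have := hb.apply_zero_le_sum (card_pos.mp he.pos)
  have := hc.apply_zero_le_sum (card_pos.mp hf.pos)
  omega

theorem eq_of_mem_oddEvenEven_of_weight_lt (ha : Monotone a) (hb : Monotone b)
    (hc : Monotone c) (hv : v ∈ oddEvenEven _) (hwa : weight a b c v < a 1)
    (hwb : weight a b c v < a 0 + (b 0 + b 1)) (hwc : weight a b c v < a 0 + (c 0 + c 1)) :
    v = (ind {0}, ind ∅, ind ∅) := by
  obtain ⟨hd, he, hf⟩ := mem_oddEvenEven.mp hv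
  rw [weight_eq] at hwa hwb hwc
  have ha0 := ha.apply_zero_le_sum (card_pos.mp hd.pos)
  have hd0 : supp v.1 = {0} := eq_singleton_of_odd_of_forall_eq hd fun i hi => by
    by_contra hi0
    have := ha.apply_one_le_sum hi hi0
    omega
  have he0 : supp v.2.1 = ∅ := not_nonempty_iff_eq_empty.mp fun hne => by
    have := hb.apply_zero_add_apply_one_le_sum (one_lt_card_of_even he hne)
    omega
  have hf0 : supp v.2.2 = ∅ := not_nonempty_iff_eq_empty.mp fun hne => by
    have := hc.apply_zero_add_apply_one_le_sum (one_lt_card_of_even hf hne)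
    omega
  rw [eq_ind_supp v, hd0, he0, hf0]

theorem eq_of_mem_evenOddOdd_of_weight_lt (ha : Monotone a) (hb : Monotone b)
    (hc : Monotone c) (hv : v ∈ evenOddOdd _) (hwa : weight a b c v < a 0 + a 1)
    (hwb : weight a b c v < b 1 + c 0) (hwc : weight a b c v < b 0 + c 1) :
    v = (ind ∅, ind {0}, ind {0}) := by
  obtain ⟨hd, he, hf⟩ := mem_evenOddOdd.mp hv
  rw [weight_eq] at hwa hwb hwc
  have hb0 := hb.apply_zero_le_sum (card_pos.mp he.pos)
  have hc0 := hc.apply_zero_le_sum (card_pos.mp hf.pos)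
  have hd0 : supp v.1 = ∅ := not_nonempty_iff_eq_empty.mp fun hne => by
    have := ha.apply_zero_add_apply_one_le_sum (one_lt_card_of_even hd hne)
    omega
  have he0 : supp v.2.1 = {0} := eq_singleton_of_odd_of_forall_eq he fun i hi => by
    by_contra hi0
    have := hb.apply_one_le_sum hi hi0
    omega
  have hf0 : supp v.2.2 = {0} := eq_singleton_of_odd_of_forall_eq hf fun i hi => by
    by_contra hi0
    have := hc.apply_one_le_sum hi hi0
    omega
  rw [eq_ind_supp v, hd0, he0, hf0]

theorem apply_zero_eq_add_of_map_eq (ha : Monotone a) (hb : Monotone b) (hc : Monotone c)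
    (h : (oddEvenEven _).val.map (weight a b c) = (evenOddOdd _).val.map (weight a b c)) :
    a 0 = b 0 + c 0 := by
  have hA : a 0 ∈ (evenOddOdd _).val.map (weight a b c) :=
    h ▸ Multiset.mem_map.mpr ⟨(ind {0}, ind ∅, ind ∅), by simp, by simp⟩
  have hB : b 0 + c 0 ∈ (oddEvenEven _).val.map (weight a b c) :=
    h ▸ Multiset.mem_map.mpr ⟨(ind ∅, ind {0}, ind {0}), by simp, by simp⟩
  obtain ⟨x, hx, hxw⟩ := Multiset.mem_map.mp hA
  obtain ⟨y, hy, hyw⟩ := Multiset.mem_map.mp hB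
  have := add_le_weight_of_mem_evenOddOdd (a := a) hb hc (mem_val.mp hx)
  have := apply_zero_le_weight_of_mem_oddEvenEven (b := b) (c := c) ha (mem_val.mp hy)
  omega

theorem apply_one_eq_min_of_map_eq (ha : Monotone a) (hb : Monotone b) (hc : Monotone c)
    (ha0 : 0 < a 0) (hb0 : 0 < b 0) (hc0 : 0 < c 0)
    (h : (oddEvenEven _).val.map (weight a b c) = (evenOddOdd _).val.map (weight a b c)) :
    a 1 = min (b 0 + c 1) (b 1 + c 0) := by
  have habc := apply_zero_eq_add_of_map_eq ha hb hc h
  have hb01 := hb (Fin.zero_le 1)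
  have hc01 := hc (Fin.zero_le 1)
  apply le_antisymm
  · -- Since `a 0 = b 0 + c 0 > c 0, b 0`, every `A`-triple with a nonempty `E` or `F` weighs
    -- more than the threshold.
    by_contra! hlt
    obtain ⟨x, hx, hxne, hxw⟩ := exists_mem_evenOddOdd_weight_eq_min a b c
    refine (map_val_ne_of_unique_le (u := min (b 0 + c 1) (b 1 + c 0))
      (x₁ := (ind ∅, ind {0}, ind {0})) (by simp) hx hxne.symm (by simp; omega) hxw.le
      fun y hy hyw => eq_of_mem_oddEvenEven_of_weight_lt ha hb hc hy ?_ ?_ ?_) h.symm <;> omega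
  · by_contra! hlt
    refine (map_val_ne_of_unique_le (u := a 1) (x₁ := (ind {0}, ind ∅, ind ∅))
      (x₂ := (ind {1}, ind ∅, ind ∅)) (by simp) (by simp) (by simp [ind_injective.eq_iff])
      (by simpa using ha (Fin.zero_le 1)) (by simp)
      fun y hy hyw => eq_of_mem_evenOddOdd_of_weight_lt ha hb hc hy ?_ ?_ ?_) h <;> omega

end Monotone

end FixedPointWeights

open FixedPointWeights in
theorem stmt_11 (n : ℕ) (hn : 2 ≤ n) (a b c : Fin n → ℕ)
    (hapos : ∀ i, 0 < a i) (hbpos : ∀ i, 0 < b i) (hcpos : ∀ i, 0 < c i)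
    (hamono : Monotone a) (hbmono : Monotone b) (hcmono : Monotone c)
    (hAB :
      ((Finset.univ.filter
          (fun v : (Fin n → Bool) × (Fin n → Bool) × (Fin n → Bool) =>
            Odd (Finset.univ.filter (fun i => v.1 i = true)).card ∧
            Even (Finset.univ.filter (fun i => v.2.1 i = true)).card ∧
            Even (Finset.univ.filter (fun i => v.2.2 i = true)).card)).val.map
        (fun v => ∑ i, ((if v.1 i then a i else 0) + (if v.2.1 i then b i else 0)
          + (if v.2.2 i then c i else 0)))) =
      ((Finset.univ.filter
          (fun v : (Fin n → Bool) × (Fin n → Bool) × (Fin n → Bool) =>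
            Even (Finset.univ.filter (fun i => v.1 i = true)).card ∧
            Odd (Finset.univ.filter (fun i => v.2.1 i = true)).card ∧
            Odd (Finset.univ.filter (fun i => v.2.2 i = true)).card)).val.map
        (fun v => ∑ i, ((if v.1 i then a i else 0) + (if v.2.1 i then b i else 0)
          + (if v.2.2 i then c i else 0))))) :
    a ⟨0, by omega⟩ = b ⟨0, by omega⟩ + c ⟨0, by omega⟩ ∧
      (a ⟨1, by omega⟩ = b ⟨0, by omega⟩ + c ⟨1, by omega⟩ ∨
       a ⟨1, by omega⟩ = b ⟨1, by omega⟩ + c ⟨0, by omega⟩) := by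
  obtain ⟨k, rfl⟩ : ∃ k, n = k + 2 := ⟨n - 2, by omega⟩
  have h : (oddEvenEven _).val.map (weight a b c) = (evenOddOdd _).val.map (weight a b c) := hAB
  have h1 := apply_one_eq_min_of_map_eq hamono hbmono hcmono (hapos 0) (hbpos 0) (hcpos 0) h
  exact ⟨apply_zero_eq_add_of_map_eq hamono hbmono hcmono h, h1 ▸ min_choice _ _⟩
end

section
/- Let a_1, a_2, b_1, b_2, c_1, c_2 be positive (nonzero) rational numbers with a_1 = b_1 + c_1 and a_2 = b_1 + c_2. If 1/(a_1 a_2 b_1 b_2) + 1/(a_1 a_2 c_1 c_2) - 1/(b_1 b_2 c_1 c_2) = 0, then b_2 = b_1 + c_1 + c_2. -/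
theorem one_div_add_one_div_sub_one_div_eq_zero_iff {K : Type*} [Field K] {a₁ a₂ b₁ b₂ c₁ c₂ : K}
    (ha₁ : a₁ ≠ 0) (ha₂ : a₂ ≠ 0) (hb₁ : b₁ ≠ 0) (hb₂ : b₂ ≠ 0) (hc₁ : c₁ ≠ 0) (hc₂ : c₂ ≠ 0) :
    1 / (a₁ * a₂ * b₁ * b₂) + 1 / (a₁ * a₂ * c₁ * c₂) - 1 / (b₁ * b₂ * c₁ * c₂) = 0 ↔
      b₁ * b₂ + c₁ * c₂ = a₁ * a₂ := by
  rw [div_add_div _ _ (by positivity) (by positivity), div_sub_div _ _ (by positivity) (by positivity),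
    div_eq_zero_iff, or_iff_left (by positivity), sub_eq_zero]
  constructor
  · intro h
    have hne : a₁ * a₂ * b₁ * b₂ * c₁ * c₂ ≠ 0 := by positivity
    apply mul_left_cancel₀ hne
    linear_combination h
  · intro h
    linear_combination (a₁ * a₂ * b₁ * b₂ * c₁ * c₂) * h

theorem stmt_13 (a₁ a₂ b₁ b₂ c₁ c₂ : ℚ)
    (ha₁ : 0 < a₁) (ha₂ : 0 < a₂) (hb₁ : 0 < b₁) (hb₂ : 0 < b₂)
    (hc₁ : 0 < c₁) (hc₂ : 0 < c₂)
    (h₁ : a₁ = b₁ + c₁) (h₂ : a₂ = b₁ + c₂)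
    (h : 1 / (a₁ * a₂ * b₁ * b₂) + 1 / (a₁ * a₂ * c₁ * c₂) - 1 / (b₁ * b₂ * c₁ * c₂) = 0) :
    b₂ = b₁ + c₁ + c₂ := by
  have hweights : b₁ * b₂ + c₁ * c₂ = a₁ * a₂ :=
    (one_div_add_one_div_sub_one_div_eq_zero_iff ha₁.ne' ha₂.ne' hb₁.ne' hb₂.ne' hc₁.ne' hc₂.ne').1 h
  subst h₁ h₂
  apply mul_left_cancel₀ hb₁.ne'
  linear_combination hweights
end

section
/- There do not exist positive integers a_1 ≤ a_2 ≤ a_3, b_3, c_1 ≤ c_2 ≤ c_3, permutations (i_1,i_2,i_3) and (j_1,j_2,j_3) of (1,2,3), satisfying all of: (1) c_1 < a_1; (2) a_{i_1} + c_{j_1} = b_3 and a_{i_2} + c_{j_2} = b_3; (3) a_{i_3} = c_{j_3}; (4) c_{j_3} ≠ c_1; (5) a_1² + a_2² + a_3² = c_1² + c_2² + c_3². -/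
/-!
Write `x, y` for the two `a`-weights and `u, v` for the two `c`-weights paired to `b₃`.
Cancelling the common weight `a (σ 2) = c (τ 2)` from the equal sums of squares gives
`x² + y² = u² + v²`, and together with `x + u = y + v = b₃` this forces `{u, v} = {y, x}`.
Since `c (τ 2) ≠ c 0`, the smallest weight `c 0` is one of `u, v`, hence equals some `a`-weight,
which is impossible because `c 0 < a 0 ≤ a i`.
-/

theorem Equiv.Perm.sum_fin_three_comp {M : Type*} [AddCommMonoid M] (σ : Equiv.Perm (Fin 3))
    (f : Fin 3 → M) : f (σ 0) + f (σ 1) + f (σ 2) = f 0 + f 1 + f 2 := by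
  simpa only [Fin.sum_univ_three] using Equiv.sum_comp σ f

theorem Equiv.Perm.exists_fin_three_apply_eq (σ : Equiv.Perm (Fin 3)) (k : Fin 3) :
    σ 0 = k ∨ σ 1 = k ∨ σ 2 = k := by
  obtain ⟨i, rfl⟩ := σ.surjective k
  fin_cases i <;> simp

theorem eq_and_eq_of_add_eq_of_sq_add_sq_eq {x y u v b : ℕ} (hxu : x + u = b) (hyv : y + v = b)
    (hsq : x ^ 2 + y ^ 2 = u ^ 2 + v ^ 2) : u = y ∧ v = x := by
  have hdiff : (x + u) * x + (y + v) * y = (x + u) * u + (y + v) * v := by nlinarith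
  rw [hxu, hyv, ← mul_add, ← mul_add] at hdiff
  rcases Nat.eq_zero_or_pos b with rfl | hb
  · omega
  · have := Nat.eq_of_mul_eq_mul_left hb hdiff
    omega

theorem stmt_16 :
    ¬ ∃ (a c : Fin 3 → ℕ) (b₃ : ℕ) (σ τ : Equiv.Perm (Fin 3)),
      (∀ i, 0 < a i) ∧ (∀ i, 0 < c i) ∧ 0 < b₃ ∧
      Monotone a ∧ Monotone c ∧
      c 0 < a 0 ∧
      a (σ 0) + c (τ 0) = b₃ ∧
      a (σ 1) + c (τ 1) = b₃ ∧
      a (σ 2) = c (τ 2) ∧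
      c (τ 2) ≠ c 0 ∧
      a 0 ^ 2 + a 1 ^ 2 + a 2 ^ 2 = c 0 ^ 2 + c 1 ^ 2 + c 2 ^ 2 := by
  rintro ⟨a, c, b₃, σ, τ, -, -, -, ha, -, hca, h0, h1, h2, hτ2, hsq⟩
  have hsqσ := σ.sum_fin_three_comp (a · ^ 2)
  have hsqτ := τ.sum_fin_three_comp (c · ^ 2)
  have hsq' : a (σ 0) ^ 2 + a (σ 1) ^ 2 = c (τ 0) ^ 2 + c (τ 1) ^ 2 := by
    rw [h2] at hsqσ
    omega
  obtain ⟨hu, hv⟩ := eq_and_eq_of_add_eq_of_sq_add_sq_eq h0 h1 hsq'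
  have ha0 : ∀ i, a 0 ≤ a i := fun i ↦ ha (Fin.zero_le i)
  rcases τ.exists_fin_three_apply_eq 0 with hτ | hτ | hτ
  · have := ha0 (σ 1)
    rw [hτ] at hu
    omega
  · have := ha0 (σ 0)
    rw [hτ] at hv
    omega
  · exact hτ2 (by rw [hτ])
end

section
/- Let P be a finite set, ε : P → ℤ with ε(p) ∈ {1, -1} for all p, let n ≥ 1, and for each p ∈ P let W_p = (w_{p,1}, …, w_{p,n}) be a tuple of positive integers. Suppose the formal power series ∑_{p ∈ P} ε(p) · ∏_{i=1}^n (1 + t^{w_{p,i}})·(1 - t^{w_{p,i}})⁻¹ ∈ ℚ⟦t⟧ is a constant. Let w = min over all p, i of w_{p,i}. Then ∑_{p : ε(p)=1} #{i : w_{p,i} = w} = ∑_{p : ε(p)=-1} #{i : w_{p,i} = w}. -/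
open PowerSeries Finset

/-!
Each factor is `(1 + t^a)(1 - t^a)⁻¹ = 1 + t^w G_a` with `G_a = 2 t^(a-w) (1 - t^a)⁻¹`, whose
constant term is `2` if `a = w` and `0` otherwise. Modulo `t^(2w)` a product of such factors is
`1 + t^w ∑ G_a`, so the coefficient of `t^w` in the signed sum is `2 ∑_p ε(p) #{i | w_{p,i} = w}`.
It vanishes because the series is constant and `w > 0`.
-/

theorem dvd_prod_one_add_mul_sub {R ι : Type*} [CommRing R] (x : R) (a : ι → R) (s : Finset ι) :
    x ^ 2 ∣ ∏ i ∈ s, (1 + x * a i) - (1 + x * ∑ i ∈ s, a i) := by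
  induction s using Finset.cons_induction with
  | empty => simp
  | cons j s hj ih =>
    obtain ⟨r, hr⟩ := ih
    rw [sub_eq_iff_eq_add] at hr
    rw [prod_cons, sum_cons, hr]
    exact ⟨a j * ∑ i ∈ s, a i + (1 + x * a j) * r, by ring⟩

theorem coeff_prod_one_add_X_pow_mul {R ι : Type*} [CommRing R] {m : ℕ} (hm : 0 < m)
    (G : ι → R⟦X⟧) (s : Finset ι) :
    coeff m (∏ i ∈ s, (1 + X ^ m * G i)) = ∑ i ∈ s, constantCoeff (G i) := by
  obtain ⟨r, hr⟩ := dvd_prod_one_add_mul_sub (X ^ m) G s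
  have hm2 : ¬ m * 2 ≤ m := by omega
  rw [sub_eq_iff_eq_add.mp hr, ← pow_mul]
  simp [hm2, coeff_X_pow_mul', coeff_one, hm.ne', map_sum]

theorem one_add_X_pow_mul_inv_one_sub_X_pow {k : Type*} [Field k] {a : ℕ} (ha : 0 < a) :
    ((1 + X ^ a) * (1 - X ^ a)⁻¹ : k⟦X⟧) = 1 + 2 * X ^ a * (1 - X ^ a)⁻¹ := by
  have hunit : constantCoeff (1 - X ^ a : k⟦X⟧) ≠ 0 := by simp [zero_pow ha.ne']
  linear_combination PowerSeries.mul_inv_cancel _ hunit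

theorem coeff_prod_one_add_X_pow_mul_inv_one_sub_X_pow {k ι : Type*} [Field k] {m : ℕ}
    (hm : 0 < m) (a : ι → ℕ) (s : Finset ι) (ha : ∀ i ∈ s, m ≤ a i) :
    coeff m (∏ i ∈ s, (1 + X ^ a i) * (1 - X ^ a i)⁻¹ : k⟦X⟧) = 2 * #{i ∈ s | a i = m} := by
  have hsplit : ∀ i ∈ s, ((1 + X ^ a i) * (1 - X ^ a i)⁻¹ : k⟦X⟧)
      = 1 + X ^ m * (2 * X ^ (a i - m) * (1 - X ^ a i)⁻¹) := by
    intro i hi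
    obtain ⟨d, hd⟩ := Nat.exists_eq_add_of_le (ha i hi)
    rw [one_add_X_pow_mul_inv_one_sub_X_pow (hm.trans_le (ha i hi)), hd, Nat.add_sub_cancel_left]
    ring
  have hG0 : ∀ i ∈ s, constantCoeff (2 * X ^ (a i - m) * (1 - X ^ a i)⁻¹ : k⟦X⟧)
      = if a i = m then 2 else 0 := by
    intro i hi
    have hai : a i ≠ 0 := (hm.trans_le (ha i hi)).ne'
    have : a i - m = 0 ↔ a i = m := by have := ha i hi; omega
    simp [hai, this, zero_pow_eq, map_ofNat]
  rw [prod_congr rfl hsplit, coeff_prod_one_add_X_pow_mul hm, sum_congr rfl hG0, sum_ite,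
    sum_const_zero, add_zero, sum_const, nsmul_eq_mul, mul_comm]

theorem sum_mul_eq_sum_filter_sub_sum_filter {ι R : Type*} [CommRing R] (s : Finset ι)
    (ε : ι → ℤ) (hε : ∀ i ∈ s, ε i = 1 ∨ ε i = -1) (N : ι → R) :
    ∑ i ∈ s, ε i * N i = ∑ i ∈ s with ε i = 1, N i - ∑ i ∈ s with ε i = -1, N i := by
  rw [sum_filter, sum_filter, ← sum_sub_distrib]
  refine sum_congr rfl fun i hi => ?_
  rcases hε i hi with h | h <;> simp [h]

theorem stmt_18_general (P : Type) [Fintype P]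
    (ε : P → ℤ) (hval : ∀ p, ε p = 1 ∨ ε p = -1)
    (n : ℕ) (w : P → Fin n → ℕ) (hw : ∀ p i, 0 < w p i)
    (hconst : ∃ c : ℚ,
      (∑ p, (ε p : ℚ⟦X⟧) * ∏ i, (1 + (X : ℚ⟦X⟧) ^ w p i) * (1 - (X : ℚ⟦X⟧) ^ w p i)⁻¹)
        = C c)
    (wmin : ℕ) (hle : ∀ p i, wmin ≤ w p i) :
    ∑ p ∈ Finset.univ.filter (fun p => ε p = 1),
        (Finset.univ.filter (fun i => w p i = wmin)).card
      = ∑ p ∈ Finset.univ.filter (fun p => ε p = -1),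
        (Finset.univ.filter (fun i => w p i = wmin)).card := by
  obtain ⟨c, hc⟩ := hconst
  rcases Nat.eq_zero_or_pos wmin with rfl | hpos
  · simp [fun p i => (hw p i).ne']
  have hcoeff := congrArg (coeff wmin) hc
  simp only [map_sum, coeff_C, hpos.ne', if_false, ← map_intCast (C (R := ℚ)), coeff_C_mul,
    coeff_prod_one_add_X_pow_mul_inv_one_sub_X_pow hpos _ _ fun i _ => hle _ i] at hcoeff
  have hsigned : ∑ p, (ε p : ℚ) * #{i | w p i = wmin} = 0 := by
    simpa [mul_left_comm _ (2 : ℚ), ← mul_sum] using hcoeff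
  rw [sum_mul_eq_sum_filter_sub_sum_filter _ _ (fun p _ => hval p), sub_eq_zero] at hsigned
  exact_mod_cast hsigned

theorem stmt_18 (P : Type) [Fintype P] [DecidableEq P] [Nonempty P]
    (ε : P → ℤ) (hval : ∀ p, ε p = 1 ∨ ε p = -1)
    (n : ℕ) (hn : 0 < n) (w : P → Fin n → ℕ) (hw : ∀ p i, 0 < w p i)
    (hconst : ∃ c : ℚ,
      (∑ p, (ε p : ℚ⟦X⟧) * ∏ i, (1 + (X : ℚ⟦X⟧) ^ w p i) * (1 - (X : ℚ⟦X⟧) ^ w p i)⁻¹)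
        = C c)
    (wmin : ℕ) (hmem : ∃ p i, w p i = wmin) (hle : ∀ p i, wmin ≤ w p i) :
    ∑ p ∈ Finset.univ.filter (fun p => ε p = 1),
        (Finset.univ.filter (fun i => w p i = wmin)).card
      = ∑ p ∈ Finset.univ.filter (fun p => ε p = -1),
        (Finset.univ.filter (fun i => w p i = wmin)).card :=
  stmt_18_general P ε hval n w hw hconst wmin hle
end
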